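/- arXiv:1309.2431 — 2 statements merged into one kernel-verified Lean document; each statement's English description precedes it below -/
import Mathlib

section
/- Let μ_y, a₁, a₂, a₃ be real numbers with a₂ > 0 and D := (μ_y² + a₁)·a₂ − a₃² > 0. Then the function f(ω₁, ω₂) = (ω₁ − 1)² μ_y² + ω₁² a₁ + ω₂² a₂ − 2 ω₁ ω₂ a₃ on ℝ² attains its global minimum at ω₁* = a₂ μ_y² / D and ω₂* = a₃ μ_y² / D; that is, f(ω₁, ω₂) ≥ f(ω₁*, ω₂*) for all real ω₁, ω₂. -/
/-- The MSE of the regression-type estimator `t₃` as a function of `ω₁, ω₂`: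
`f(ω₁, ω₂) = (ω₁ − 1)² μ_y² + ω₁² a₁ + ω₂² a₂ − 2 ω₁ ω₂ a₃`. -/
def mseT3 (μy a₁ a₂ a₃ ω₁ ω₂ : ℝ) : ℝ :=
  (ω₁ - 1) ^ 2 * μy ^ 2 + ω₁ ^ 2 * a₁ + ω₂ ^ 2 * a₂ - 2 * ω₁ * ω₂ * a₃

/-- with `a₂ > 0` and `D = (μ_y² + a₁)·a₂ − a₃² > 0`, the function
`f(ω₁, ω₂) = (ω₁ − 1)² μ_y² + ω₁² a₁ + ω₂² a₂ − 2 ω₁ ω₂ a₃` attains its global minimum at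
`ω₁* = a₂ μ_y² / D`, `ω₂* = a₃ μ_y² / D`. -/
theorem mseT3_min_at (μy a₁ a₂ a₃ : ℝ) (ha₂ : 0 < a₂)
    (hD : 0 < (μy ^ 2 + a₁) * a₂ - a₃ ^ 2) :
    ∀ ω₁ ω₂ : ℝ,
      mseT3 μy a₁ a₂ a₃ ω₁ ω₂ ≥
        mseT3 μy a₁ a₂ a₃
          (a₂ * μy ^ 2 / ((μy ^ 2 + a₁) * a₂ - a₃ ^ 2))
          (a₃ * μy ^ 2 / ((μy ^ 2 + a₁) * a₂ - a₃ ^ 2)) := by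
  intro ω₁ ω₂
  set D := (μy ^ 2 + a₁) * a₂ - a₃ ^ 2 with hDdef
  have hDne : D ≠ 0 := ne_of_gt hD
  have ha₂ne : a₂ ≠ 0 := ne_of_gt ha₂
  rw [ge_iff_le, mseT3, mseT3, ← sub_nonneg]
  have key : ((ω₁ - 1) ^ 2 * μy ^ 2 + ω₁ ^ 2 * a₁ + ω₂ ^ 2 * a₂ - 2 * ω₁ * ω₂ * a₃) -
      ((a₂ * μy ^ 2 / D - 1) ^ 2 * μy ^ 2 + (a₂ * μy ^ 2 / D) ^ 2 * a₁ +
        (a₃ * μy ^ 2 / D) ^ 2 * a₂ - 2 * (a₂ * μy ^ 2 / D) * (a₃ * μy ^ 2 / D) * a₃)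
      = (a₂ * ω₂ - a₃ * ω₁) ^ 2 / a₂ + (D / a₂) * (ω₁ - a₂ * μy ^ 2 / D) ^ 2 := by
    field_simp
    ring
  rw [key]
  positivity
end

section
/- Let μ_y, a₁, a₂, a₃ be real numbers with a₂ > 0 and D := (μ_y² + a₁)·a₂ − a₃² > 0. Then the global minimum value of the function f(ω₁, ω₂) = (ω₁ − 1)² μ_y² + ω₁² a₁ + ω₂² a₂ − 2 ω₁ ω₂ a₃ over ℝ² equals μ_y² − a₂ μ_y⁴ / D; that is, the infimum of f over ℝ² is μ_y² − a₂ μ_y⁴ / ((μ_y² + a₁) a₂ − a₃²), and it is attained. -/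
namespace QuadraticMin

section Field

variable {𝕜 : Type*} [Field 𝕜]

def quadratic (b₁ b₂ b₃ b₄ c x y : 𝕜) : 𝕜 :=
  c + b₁ * x ^ 2 + 2 * b₂ * x * y + b₃ * y ^ 2 - 2 * b₄ * x

variable {b₁ b₂ b₃ b₄ : 𝕜} (c : 𝕜)

theorem quadratic_sub_eq_div (hb₃ : b₃ ≠ 0) (hD : b₁ * b₃ - b₂ ^ 2 ≠ 0) (x y : 𝕜) :
    quadratic b₁ b₂ b₃ b₄ c x y - (c - b₃ * b₄ ^ 2 / (b₁ * b₃ - b₂ ^ 2)) =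
      (((b₁ * b₃ - b₂ ^ 2) * x - b₃ * b₄) ^ 2 + (b₁ * b₃ - b₂ ^ 2) * (b₂ * x + b₃ * y) ^ 2) /
        (b₃ * (b₁ * b₃ - b₂ ^ 2)) := by
  unfold quadratic
  field_simp
  ring

theorem quadratic_minimizer_eq (hD : b₁ * b₃ - b₂ ^ 2 ≠ 0) :
    quadratic b₁ b₂ b₃ b₄ c (b₃ * b₄ / (b₁ * b₃ - b₂ ^ 2)) (-b₂ * b₄ / (b₁ * b₃ - b₂ ^ 2)) =
      c - b₃ * b₄ ^ 2 / (b₁ * b₃ - b₂ ^ 2) := by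
  unfold quadratic
  field_simp
  ring

end Field

variable {𝕜 : Type*} [Field 𝕜] [LinearOrder 𝕜] [IsStrictOrderedRing 𝕜] {b₁ b₂ b₃ b₄ : 𝕜} (c : 𝕜)

theorem le_quadratic (hb₃ : 0 < b₃) (hD : 0 < b₁ * b₃ - b₂ ^ 2) (x y : 𝕜) :
    c - b₃ * b₄ ^ 2 / (b₁ * b₃ - b₂ ^ 2) ≤ quadratic b₁ b₂ b₃ b₄ c x y := by
  rw [← sub_nonneg, quadratic_sub_eq_div c hb₃.ne' hD.ne']
  positivity

theorem isLeast_quadratic (hb₃ : 0 < b₃) (hD : 0 < b₁ * b₃ - b₂ ^ 2) :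
    IsLeast (Set.range fun p : 𝕜 × 𝕜 => quadratic b₁ b₂ b₃ b₄ c p.1 p.2)
      (c - b₃ * b₄ ^ 2 / (b₁ * b₃ - b₂ ^ 2)) :=
  ⟨⟨(_, _), quadratic_minimizer_eq c hD.ne'⟩, by
    rintro _ ⟨p, rfl⟩
    exact le_quadratic c hb₃ hD p.1 p.2⟩

end QuadraticMin

open QuadraticMin

theorem mseT3_eq_quadratic (μy a₁ a₂ a₃ ω₁ ω₂ : ℝ) :
    mseT3 μy a₁ a₂ a₃ ω₁ ω₂ = quadratic (μy ^ 2 + a₁) (-a₃) a₂ (μy ^ 2) (μy ^ 2) ω₁ ω₂ := by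
  unfold mseT3 quadratic
  ring

/-- with `a₂ > 0` and `D = (μ_y² + a₁)·a₂ − a₃² > 0`, the global minimum value of
`f(ω₁, ω₂) = (ω₁ − 1)² μ_y² + ω₁² a₁ + ω₂² a₂ − 2 ω₁ ω₂ a₃` over `ℝ²` equals
`μ_y² − a₂ μ_y⁴ / D`, and it is attained. -/
theorem mseT3_min_value (μy a₁ a₂ a₃ : ℝ) (ha₂ : 0 < a₂)
    (hD : 0 < (μy ^ 2 + a₁) * a₂ - a₃ ^ 2) :
    IsLeast (Set.range fun p : ℝ × ℝ => mseT3 μy a₁ a₂ a₃ p.1 p.2)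
      (μy ^ 2 - a₂ * μy ^ 4 / ((μy ^ 2 + a₁) * a₂ - a₃ ^ 2)) := by
  have h := isLeast_quadratic (b₁ := μy ^ 2 + a₁) (b₂ := -a₃) (b₃ := a₂) (b₄ := μy ^ 2) (μy ^ 2)
    ha₂ (by rwa [neg_sq])
  rw [neg_sq, ← pow_mul] at h
  simpa only [mseT3_eq_quadratic] using h
end
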